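/- arXiv:2511.07187 — 2 statements merged into one kernel-verified Lean document; each statement's English description precedes it below -/
import Mathlib

section
/- Let v(x,t) = V(x − θt) be a traveling-wave solution of the Fisher–KPP equation v_t = rv(1−v) + D v_xx with r, D > 0, where V: ℝ → ℝ is C², monotone decreasing, satisfies 0 ≤ V ≤ 1, V(−∞) = 1, V(+∞) = 0, V'(±∞) = 0, and V > 0. Then the wave speed satisfies θ ≥ 2√(rD). -/
open Filter

lemma no_pos_supersol {k : ℝ} (hk : 0 < k) {W W1 W2 : ℝ → ℝ}
    (hW1 : ∀ z, HasDerivAt W (W1 z) z) (hW2 : ∀ z, HasDerivAt W1 (W2 z) z)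
    (hpos : ∀ z, 0 < W z) (a : ℝ)
    (hineq : ∀ z, a ≤ z → W2 z ≤ -(k^2) * W z) : False := by
  set b := a + Real.pi / k with hb
  have hab : a < b := lt_add_of_pos_right a (div_pos Real.pi_pos hk)
  set H : ℝ → ℝ := fun z => W1 z * Real.sin (k*(z-a)) - W z * (k * Real.cos (k*(z-a))) with hH
  have hu : ∀ z : ℝ, HasDerivAt (fun z => k*(z-a)) k z := by
    intro z
    simpa using ((hasDerivAt_id z).sub_const a).const_mul k
  have hsin : ∀ z : ℝ, HasDerivAt (fun z => Real.sin (k*(z-a))) (Real.cos (k*(z-a)) * k) z :=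
    fun z => (hu z).sin
  have hcos : ∀ z : ℝ, HasDerivAt (fun z => k * Real.cos (k*(z-a))) (k * (-Real.sin (k*(z-a)) * k)) z :=
    fun z => ((hu z).cos).const_mul k
  have hHd : ∀ z : ℝ, HasDerivAt H ((W2 z + k^2 * W z) * Real.sin (k*(z-a))) z := by
    intro z
    have h := ((hW2 z).mul (hsin z)).sub ((hW1 z).mul (hcos z))
    exact h.congr_deriv (by ring)
  have hanti : AntitoneOn H (Set.Icc a b) := by
    apply antitoneOn_of_deriv_nonpos (convex_Icc a b)
    · exact (Differentiable.continuous (fun z => (hHd z).differentiableAt)).continuousOn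
    · intro x hx
      exact ((hHd x).differentiableAt).differentiableWithinAt
    · intro x hx
      rw [interior_Icc] at hx
      rw [(hHd x).deriv]
      have hsx : 0 ≤ Real.sin (k*(x-a)) := by
        apply Real.sin_nonneg_of_nonneg_of_le_pi
        · nlinarith [hx.1]
        · have hx2 : x < a + Real.pi / k := hx.2
          have : x - a ≤ Real.pi / k := by linarith
          calc k * (x-a) ≤ k * (Real.pi / k) := by nlinarith
            _ = Real.pi := by field_simp
      have := hineq x hx.1.le
      nlinarith [hpos x]
  have hHa : H a = -(W a * k) := by simp [hH]
  have hHb : H b = W b * k := by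
    have : k * (b - a) = Real.pi := by
      rw [hb]; field_simp; ring
    simp [hH, this]
  have := hanti (Set.left_mem_Icc.2 hab.le) (Set.right_mem_Icc.2 hab.le) hab.le
  rw [hHa, hHb] at this
  nlinarith [hpos a, hpos b]

theorem fisher_kpp_minimal_speed (r D θ : ℝ) (hr : 0 < r) (hD : 0 < D)
    (V : ℝ → ℝ)
    (hV : ContDiff ℝ 2 V)
    (hmono : Antitone V)
    (hbd : ∀ z, 0 ≤ V z ∧ V z ≤ 1)
    (hpos : ∀ z, 0 < V z)
    (hbot : Tendsto V atBot (nhds 1))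
    (htop : Tendsto V atTop (nhds 0))
    (hdbot : Tendsto (deriv V) atBot (nhds 0))
    (hdtop : Tendsto (deriv V) atTop (nhds 0))
    (hode : ∀ z, D * deriv (deriv V) z + θ * deriv V z + r * V z * (1 - V z) = 0) :
    2 * Real.sqrt (r * D) ≤ θ := by
  -- derivative facts
  have hV' : ContDiff ℝ (1+1) V := by norm_num; exact hV
  have hVdiff : Differentiable ℝ V := hV.differentiable (by norm_num)
  have hV1 : ∀ z, HasDerivAt V (deriv V z) z := fun z => (hVdiff z).hasDerivAt
  have hdVdiff : Differentiable ℝ (deriv V) :=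
    ((contDiff_succ_iff_deriv.mp hV').2.2).differentiable (by norm_num)
  have hV2 : ∀ z, HasDerivAt (deriv V) (deriv (deriv V) z) z := fun z => (hdVdiff z).hasDerivAt
  -- Step 1: θ ≥ 0
  have hθ0 : 0 ≤ θ := by
    set F : ℝ → ℝ := fun z => D * deriv V z + θ * V z with hF
    have hFd : ∀ z, HasDerivAt F (D * deriv (deriv V) z + θ * deriv V z) z :=
      fun z => ((hV2 z).const_mul D).add ((hV1 z).const_mul θ)
    have hFanti : Antitone F := by
      apply antitone_of_deriv_nonpos (fun z => (hFd z).differentiableAt)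
      intro z
      rw [(hFd z).deriv]
      have h := mul_nonneg (mul_nonneg hr.le (hbd z).1) (sub_nonneg.2 (hbd z).2)
      linarith [hode z]
    have hlimbot : Tendsto F atBot (nhds θ) := by
      have := (hdbot.const_mul D).add (hbot.const_mul θ)
      simpa using this
    have hlimtop : Tendsto F atTop (nhds 0) := by
      have := (hdtop.const_mul D).add (htop.const_mul θ)
      simpa using this
    have h1 : F 0 ≤ θ := by
      apply ge_of_tendsto hlimbot
      filter_upwards [eventually_le_atBot (0:ℝ)] with z hz
      exact hFanti hz
    have h2 : 0 ≤ F 0 := by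
      apply le_of_tendsto hlimtop
      filter_upwards [eventually_ge_atTop (0:ℝ)] with z hz
      exact hFanti hz
    linarith
  -- Step 2: for every ε ∈ (0,1), 4 r (1-ε) D ≤ θ²
  have key : ∀ ε : ℝ, 0 < ε → ε < 1 → 4 * (r * (1-ε)) * D ≤ θ^2 := by
    intro ε hε0 hε1
    by_contra hcon
    push_neg at hcon
    set c := r * (1 - ε) with hc
    have hc0 : 0 < c := by rw [hc]; nlinarith
    -- get a with V ≤ ε on [a,∞)
    obtain ⟨a, ha⟩ := (htop.eventually (Iio_mem_nhds hε0)).exists_forall_of_atTop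
    set α := θ / (2*D) with hα
    have hkey : 0 < c/D - α^2 := by
      have hα2 : α^2 = θ^2 / (4*D^2) := by rw [hα]; ring
      rw [hα2, div_sub_div _ _ (ne_of_gt hD) (by positivity : ((4*D^2) : ℝ) ≠ 0)]
      apply div_pos
      · nlinarith
      · positivity
    set k := Real.sqrt (c/D - α^2) with hk
    have hk0 : 0 < k := Real.sqrt_pos.2 hkey
    have hk2 : k^2 = c/D - α^2 := Real.sq_sqrt hkey.le
    set W : ℝ → ℝ := fun z => Real.exp (α*z) * V z with hW
    set W1 : ℝ → ℝ := fun z => Real.exp (α*z) * (α * V z + deriv V z) with hW1def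
    set W2 : ℝ → ℝ := fun z => Real.exp (α*z) * (α^2 * V z + 2*α*deriv V z + deriv (deriv V) z) with hW2def
    have hexp : ∀ z : ℝ, HasDerivAt (fun z => Real.exp (α*z)) (Real.exp (α*z) * α) z := by
      intro z
      exact (Real.hasDerivAt_exp (α*z)).comp z (by simpa using (hasDerivAt_id z).const_mul α)
    have hWd : ∀ z, HasDerivAt W (W1 z) z := by
      intro z
      have h := (hexp z).mul (hV1 z)
      exact h.congr_deriv (by simp only [hW1def]; ring)
    have hW1d : ∀ z, HasDerivAt W1 (W2 z) z := by
      intro z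
      have h := (hexp z).mul (((hV1 z).const_mul α).add (hV2 z))
      exact h.congr_deriv (by simp only [hW2def, Pi.add_apply]; ring)
    have hineq : ∀ z, a ≤ z → W2 z ≤ -(k^2) * W z := by
      intro z hz
      have hVε : V z < ε := ha z hz
      have h1 : D * deriv (deriv V) z + θ * deriv V z ≤ -(c * V z) := by
        have hode' := hode z
        have hbz := (hbd z).1
        have h := mul_nonneg (mul_nonneg hr.le hbz) (sub_nonneg.2 hVε.le)
        have hrw : r * V z * (1 - V z) = c * V z + r * V z * (ε - V z) := by rw [hc]; ring
        linarith
      have hαθ : θ = 2 * α * D := by rw [hα]; field_simp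
      rw [hk2]
      have hexppos : 0 < Real.exp (α*z) := Real.exp_pos _
      simp only [hW2def, hW]
      have hgoal : α^2 * V z + 2*α*deriv V z + deriv (deriv V) z ≤ -(c/D - α^2) * V z := by
        rw [hαθ] at h1
        have hcDV : c / D * D * V z = c * V z := by
          rw [div_mul_cancel₀ c (ne_of_gt hD)]
        nlinarith [h1, hD, hcDV, hpos z]
      calc Real.exp (α*z) * (α^2 * V z + 2*α*deriv V z + deriv (deriv V) z)
          ≤ Real.exp (α*z) * (-(c/D - α^2) * V z) := by
            exact mul_le_mul_of_nonneg_left hgoal hexppos.le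
        _ = -(c/D - α^2) * (Real.exp (α*z) * V z) := by ring
    exact no_pos_supersol hk0 hWd hW1d (fun z => mul_pos (Real.exp_pos _) (hpos z)) a hineq
  -- Step 3: conclude θ² ≥ 4rD
  have h4 : 4 * r * D ≤ θ^2 := by
    by_contra h4
    push_neg at h4
    set ε := (4*r*D - θ^2) / (8*r*D) with hε
    have hε0 : 0 < ε := by
      apply div_pos <;> nlinarith
    have hε1 : ε < 1 := by
      rw [hε, div_lt_one (by positivity)]
      nlinarith [sq_nonneg θ]
    have hthis := key ε hε0 hε1
    have heq : 4*(r*(1-ε))*D = (4*r*D + θ^2)/2 := by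
      rw [hε]; field_simp; ring
    rw [heq] at hthis
    linarith
  -- final
  have hs : Real.sqrt (r*D) ^ 2 = r * D := Real.sq_sqrt (by positivity)
  nlinarith [Real.sqrt_nonneg (r*D), hs]
end

section
/- For every θ ≥ 2√(rD) with r, D > 0, there exists a C² monotone decreasing function V: ℝ → (0,1) satisfying D V'' + θ V' + r V(1−V) = 0, V(−∞) = 1, V(+∞) = 0. -/
open Filter Set Topology

namespace FKPP

structure Setup where
  r : ℝ
  D : ℝ
  θ : ℝ
  lam : ℝ
  mu : ℝ
  hr : 0 < r
  hD : 0 < D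
  hθ : 0 < θ
  hlam : 0 < lam
  hlammu : lam < mu
  hlameq : D * lam ^ 2 + θ * lam - r = 0
  hmueq : D * mu ^ 2 - θ * mu + r = 0

namespace Setup

variable (S : Setup)

lemma hmu : 0 < S.mu := S.hlam.trans S.hlammu

noncomputable def gam : ℝ := S.lam + 1

lemma hgam : S.lam < S.gam := lt_add_one _

lemma hgam0 : 0 < S.gam := S.hlam.trans S.hgam

lemma hgameq : 0 < S.D * S.gam ^ 2 + S.θ * S.gam - S.r := by
  have h := S.hlameq
  have := S.hD; have := S.hθ; have := S.hlam
  simp only [gam]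
  nlinarith

noncomputable def fld (v p : ℝ) : ℝ := S.θ / S.D - S.r * v * (1 - v) / (S.D * p)

noncomputable def bar (v : ℝ) : ℝ := S.lam * (v * (1 - v))

lemma fld_bar {v : ℝ} (hv0 : 0 < v) (hv1 : v < 1) :
    S.fld v (S.bar v) = -S.lam := by
  have h1 : v * (1 - v) ≠ 0 := by
    have : 0 < 1 - v := by linarith
    positivity
  have hD := S.hD.ne'
  have hlam := S.hlam.ne'
  have h2 : (1:ℝ) - v ≠ 0 := by linarith
  simp only [fld, bar]
  field_simp
  linear_combination S.hlameq

lemma fld_mu_neg {v : ℝ} (hv0 : 0 < v) :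
    S.mu - S.fld v (S.mu * v) < 0 := by
  have hD := S.hD.ne'
  have hmu := S.hmu.ne'
  have hv := hv0.ne'
  have heq : S.mu - S.fld v (S.mu * v)
      = (S.D * S.mu ^ 2 - S.θ * S.mu + S.r - S.r * v) / (S.D * S.mu) := by
    simp only [fld]
    field_simp
    ring
  rw [heq]
  apply div_neg_of_neg_of_pos
  · have h2 := mul_pos S.hr hv0
    linarith [S.hmueq]
  · exact mul_pos S.hD S.hmu

lemma fld_gam {v : ℝ} (hv0 : 0 < v) (hv1 : v < 1) :
    -S.gam - S.fld v (S.gam * (1 - v)) < 0 := by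
  have hD := S.hD.ne'
  have hg := S.hgam0.ne'
  have h1 : (1 : ℝ) - v ≠ 0 := by intro h; rw [sub_eq_zero] at h; exact absurd h.symm hv1.ne
  have heq : -S.gam - S.fld v (S.gam * (1 - v))
      = (S.r * v - (S.D * S.gam ^ 2 + S.θ * S.gam)) / (S.D * S.gam) := by
    simp only [fld]
    field_simp
    ring
  rw [heq]
  apply div_neg_of_neg_of_pos
  · have := S.hgameq
    have : S.r * v < S.r := by nlinarith [S.hr]
    linarith [S.hgameq]
  · exact mul_pos S.hD S.hgam0

end Setup

/-- clamped logistic nonlinearity -/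
noncomputable def cc (m v : ℝ) : ℝ := max (v * (1 - v)) m

lemma cc_pos {m : ℝ} (hm : 0 < m) (v : ℝ) : 0 < cc m v := lt_max_of_lt_right hm

lemma cc_eq {m ε v : ℝ} (hmeq : m = ε * (1 - ε)) (hv : v ∈ Icc ε (1 - ε)) :
    cc m v = v * (1 - v) := by
  apply max_eq_left
  rw [hmeq]
  nlinarith [hv.1, hv.2]

namespace Setup

variable (S : Setup)

/-- truncated-clamped vector field, globally Lipschitz in `p` -/
noncomputable def trf (m v p : ℝ) : ℝ :=
  S.θ / S.D - S.r * cc m v / (S.D * max p (S.lam * cc m v))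

lemma trf_eq_fld {m v p : ℝ} (hm : 0 < m) (hv : cc m v = v * (1 - v))
    (hp : S.lam * (v * (1 - v)) ≤ p) : S.trf m v p = S.fld v p := by
  simp only [trf, fld, hv]
  rw [max_eq_left hp]
  ring_nf

noncomputable def C0 : ℝ := S.θ / S.D + S.r / (S.D * S.lam)

lemma hC0 : 0 < S.C0 := by
  have := S.hD; have := S.hθ; have := S.hr; have := S.hlam
  have h1 : 0 < S.θ / S.D := by positivity
  have h2 : 0 < S.r / (S.D * S.lam) := by positivity
  simp only [C0]; linarith

lemma trf_bound {m : ℝ} (hm : 0 < m) (v p : ℝ) : |S.trf m v p| ≤ S.C0 := by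
  have hcc := FKPP.cc_pos hm v
  have hlam := S.hlam
  have hD := S.hD
  have hr := S.hr
  have hLcc : 0 < S.lam * cc m v := mul_pos hlam hcc
  have hden : S.lam * cc m v ≤ max p (S.lam * cc m v) := le_max_right _ _
  have hden0 : 0 < max p (S.lam * cc m v) := lt_of_lt_of_le hLcc hden
  have hterm0 : 0 ≤ S.r * cc m v / (S.D * max p (S.lam * cc m v)) :=
    div_nonneg (mul_nonneg hr.le hcc.le) (mul_nonneg hD.le hden0.le)
  have hterm1 : S.r * cc m v / (S.D * max p (S.lam * cc m v)) ≤ S.r / (S.D * S.lam) := by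
    rw [div_le_div_iff₀ (mul_pos hD hden0) (mul_pos hD hlam)]
    have h1 : S.r * (S.lam * cc m v) ≤ S.r * max p (S.lam * cc m v) :=
      mul_le_mul_of_nonneg_left hden hr.le
    nlinarith [hD.le]
  have hθD : 0 ≤ S.θ / S.D := div_nonneg S.hθ.le hD.le
  have hrDl : 0 ≤ S.r / (S.D * S.lam) := div_nonneg hr.le (mul_pos hD hlam).le
  rw [abs_le]
  exact ⟨by simp only [trf, C0]; linarith, by simp only [trf, C0]; linarith⟩

lemma trf_lip {m : ℝ} (hm : 0 < m) (v p q : ℝ) :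
    |S.trf m v p - S.trf m v q| ≤ S.r / (S.D * S.lam ^ 2 * m) * |p - q| := by
  have hcc := FKPP.cc_pos hm v
  have hccm : m ≤ cc m v := le_max_right _ _
  have hlam := S.hlam
  have hD := S.hD
  have hr := S.hr
  set L := S.lam * cc m v with hL
  have hL0 : 0 < L := mul_pos hlam hcc
  set A := max p L with hA
  set B := max q L with hB
  have hLA : L ≤ A := le_max_right _ _
  have hLB : L ≤ B := le_max_right _ _
  have hA0 : 0 < A := lt_of_lt_of_le hL0 hLA
  have hB0 : 0 < B := lt_of_lt_of_le hL0 hLB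
  have hA' := hA0.ne'
  have hB' := hB0.ne'
  have hD' := hD.ne'
  have hAB : |A - B| ≤ |p - q| := abs_max_sub_max_le_abs _ _ _
  have heq : S.trf m v p - S.trf m v q = S.r * cc m v / S.D * ((A - B) / (A * B)) := by
    simp only [trf, ← hL, ← hA, ← hB]
    field_simp
    ring
  have hfac0 : (0:ℝ) ≤ S.r * cc m v / S.D := div_nonneg (mul_nonneg hr.le hcc.le) hD.le
  rw [heq, abs_mul, abs_of_nonneg hfac0, abs_div, abs_of_nonneg (mul_pos hA0 hB0).le]
  have h3 : |A - B| / (A * B) ≤ |p - q| / (L * L) := by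
    apply div_le_div₀ (abs_nonneg _) hAB (mul_pos hL0 hL0)
    exact mul_le_mul hLA hLB hL0.le hA0.le
  calc S.r * cc m v / S.D * (|A - B| / (A * B))
      ≤ S.r * cc m v / S.D * (|p - q| / (L * L)) :=
        mul_le_mul_of_nonneg_left h3 hfac0
    _ = S.r / (S.D * S.lam ^ 2 * cc m v) * |p - q| := by
        rw [hL]
        have hcc' := hcc.ne'
        have hlam' := hlam.ne'
        field_simp
    _ ≤ S.r / (S.D * S.lam ^ 2 * m) * |p - q| := by
        apply mul_le_mul_of_nonneg_right _ (abs_nonneg _)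
        apply div_le_div_of_nonneg_left hr.le
        · exact mul_pos (mul_pos hD (pow_pos hlam 2)) hm
        · exact mul_le_mul_of_nonneg_left hccm (mul_pos hD (pow_pos hlam 2)).le

lemma trf_contOn {m : ℝ} (hm : 0 < m) (x : ℝ) : Continuous (fun t => S.trf m t x) := by
  have hcc : Continuous (cc m) := by
    apply Continuous.max _ continuous_const
    exact continuous_id.mul (continuous_const.sub continuous_id)
  apply Continuous.sub continuous_const
  apply Continuous.div
  · exact continuous_const.mul hcc
  · exact continuous_const.mul (continuous_const.max (continuous_const.mul hcc))
  · intro t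
    have h1 : 0 < cc m t := FKPP.cc_pos hm t
    have h2 : 0 < max x (S.lam * cc m t) :=
      lt_of_lt_of_le (mul_pos S.hlam h1) (le_max_right _ _)
    exact (mul_pos S.hD h2).ne'


lemma bar_deriv (v : ℝ) : HasDerivAt S.bar (S.lam * (1 - 2 * v)) v := by
  show HasDerivAt (fun y => S.lam * (y * (1 - y))) (S.lam * (1 - 2 * v)) v
  have h : HasDerivAt (fun y : ℝ => y * (1 - y)) (1 - 2 * v) v := by
    have h2 := (hasDerivAt_id v).mul ((hasDerivAt_const v (1:ℝ)).sub (hasDerivAt_id v))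
    exact h2.congr_deriv (by simp only [id, Pi.sub_apply]; ring)
  exact h.const_mul S.lam

lemma bar_cont : Continuous S.bar := by
  show Continuous (fun y => S.lam * (y * (1 - y)))
  continuity

end Setup

open Setup

/-- A function that is nonnegative at the right endpoint and has strictly negative
derivative at every zero is nonnegative on the whole interval. -/
lemma barrier {G : ℝ → ℝ} {x₀ x₁ : ℝ} (hx : x₀ ≤ x₁)
    (hc : ContinuousOn G (Icc x₀ x₁)) (hend : 0 ≤ G x₁)
    (hder : ∀ v ∈ Icc x₀ x₁, G v = 0 → ∃ c < 0, HasDerivWithinAt G c (Icc x₀ x₁) v) :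
    ∀ v ∈ Icc x₀ x₁, 0 ≤ G v := by
  by_contra h
  push_neg at h
  obtain ⟨w, hw, hGw⟩ := h
  have hwx : w < x₁ := lt_of_le_of_ne hw.2 (by rintro rfl; exact absurd hend (not_le.2 hGw))
  set S : Set ℝ := {v ∈ Icc w x₁ | G v < 0} with hS
  have hwS : w ∈ S := ⟨⟨le_rfl, hw.2⟩, hGw⟩
  have hne : S.Nonempty := ⟨w, hwS⟩
  have hbdd : BddAbove S := ⟨x₁, fun v hv => hv.1.2⟩
  set s := sSup S with hsdef
  have hws : w ≤ s := le_csSup hbdd hwS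
  have hsx : s ≤ x₁ := csSup_le hne fun v hv => hv.1.2
  have hsIcc : s ∈ Icc x₀ x₁ := ⟨hw.1.trans hws, hsx⟩
  have hsub : Icc w x₁ ⊆ Icc x₀ x₁ := Icc_subset_Icc hw.1 le_rfl
  -- G s ≤ 0
  have hclosed : IsClosed {v ∈ Icc w x₁ | G v ≤ 0} := by
    have : {v ∈ Icc w x₁ | G v ≤ 0} = Icc w x₁ ∩ G ⁻¹' Iic 0 := rfl
    rw [this]
    exact ContinuousOn.preimage_isClosed_of_isClosed (hc.mono hsub) isClosed_Icc isClosed_Iic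
  have hsmem : s ∈ {v ∈ Icc w x₁ | G v ≤ 0} := by
    have h1 : s ∈ closure S := csSup_mem_closure hne hbdd
    have h2 : closure S ⊆ {v ∈ Icc w x₁ | G v ≤ 0} := by
      apply closure_minimal _ hclosed
      exact fun v hv => ⟨hv.1, hv.2.le⟩
    exact h2 h1
  have hGs_le : G s ≤ 0 := hsmem.2
  have hsIcc' : s ∈ Icc w x₁ := hsmem.1
  -- points strictly to the right of s are nonnegative
  have hGpos : ∀ v, s < v → v ≤ x₁ → 0 ≤ G v := by
    intro v hsv hvx
    by_contra hneg
    exact absurd (le_csSup hbdd ⟨⟨hws.trans hsv.le, hvx⟩, not_le.1 hneg⟩) (not_le.2 hsv)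
  -- G s = 0
  have hGs : G s = 0 := by
    rcases eq_or_lt_of_le hGs_le with h | h
    · exact h
    exfalso
    have hsx1 : s < x₁ := by
      rcases lt_or_eq_of_le hsx with h' | h'
      · exact h'
      · exfalso; rw [h'] at h; linarith
    have hcw : ContinuousWithinAt G (Icc w x₁) s := (hc.mono hsub) s hsIcc'
    have hev : ∀ᶠ v in 𝓝[Icc w x₁] s, G v < 0 := hcw (Iio_mem_nhds h)
    rw [eventually_nhdsWithin_iff] at hev
    obtain ⟨δ, hδ, hball⟩ := Metric.eventually_nhds_iff.mp hev
    set v := min (s + δ / 2) x₁ with hv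
    have hsv : s < v := lt_min (by linarith) hsx1
    have hvmem : v ∈ Icc w x₁ := ⟨hws.trans hsv.le, min_le_right _ _⟩
    have hdist : dist v s < δ := by
      rw [Real.dist_eq, abs_of_nonneg (by linarith)]
      have : v ≤ s + δ / 2 := min_le_left _ _
      linarith
    exact absurd (hball hdist hvmem) (not_lt.2 (hGpos v hsv hvmem.2))
  -- derivative at s is negative
  obtain ⟨c, hc0, hd⟩ := hder s hsIcc hGs
  rw [hasDerivWithinAt_iff_tendsto_slope] at hd
  have hev : ∀ᶠ v in 𝓝[Icc x₀ x₁ \ {s}] s, slope G s v < 0 := hd (Iio_mem_nhds hc0)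
  rw [eventually_nhdsWithin_iff] at hev
  obtain ⟨δ, hδ, hball⟩ := Metric.eventually_nhds_iff.mp hev
  rcases lt_or_eq_of_le hsx with hsx1 | hseq
  · -- s < x₁ : there is a point just to the right with G < 0, contradiction
    set v := min (s + δ / 2) x₁ with hv
    have hsv : s < v := lt_min (by linarith) hsx1
    have hvmem : v ∈ Icc x₀ x₁ \ {s} :=
      ⟨⟨hsIcc.1.trans hsv.le, min_le_right _ _⟩, ne_of_gt hsv⟩
    have hdist : dist v s < δ := by
      rw [Real.dist_eq, abs_of_nonneg (by linarith)]
      have : v ≤ s + δ / 2 := min_le_left _ _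
      linarith
    have hslope : slope G s v < 0 := hball hdist hvmem
    rw [slope_def_field] at hslope
    have hnum : G v - G s < 0 := by
      rcases div_neg_iff.mp hslope with ⟨h1, h2⟩ | ⟨h1, h2⟩
      · exfalso; linarith
      · exact h1
    have : G v < 0 := by linarith [hGs]
    exact absurd this (not_lt.2 (hGpos v hsv hvmem.1.2))
  · -- s = x₁ : points of S accumulate at s from the left but slope forces G > 0 there
    obtain ⟨v, hvS, hvlt⟩ := exists_lt_of_lt_csSup hne (show s - δ/2 < sSup S by rw [← hsdef]; linarith)
    have hvle : v ≤ s := by rw [hsdef]; exact le_csSup hbdd hvS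
    have hvne : v ≠ s := by
      intro hh
      have h2 := hvS.2
      rw [hh, hGs] at h2
      exact lt_irrefl _ h2
    have hvmem : v ∈ Icc x₀ x₁ \ {s} := ⟨⟨hw.1.trans hvS.1.1, hvS.1.2⟩, hvne⟩
    have hdist : dist v s < δ := by
      rw [Real.dist_eq, abs_of_nonpos (by linarith)]
      linarith
    have hslope := hball hdist hvmem
    rw [slope_def_field] at hslope
    have hvs : v < s := lt_of_le_of_ne hvle hvne
    have hnum : 0 < G v - G s := by
      rcases div_neg_iff.mp hslope with ⟨h1, h2⟩ | ⟨h1, h2⟩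
      · exact h1
      · exfalso; linarith
    have : 0 < G v := by linarith [hGs]
    linarith [hvS.2]

theorem exists_sol (S : Setup) {ε : ℝ} (hε0 : 0 < ε) (hε4 : ε ≤ 1/4) :
    ∃ q : ℝ → ℝ,
      (∀ v ∈ Icc ε (1 - ε), HasDerivWithinAt q (S.fld v (q v)) (Icc ε (1 - ε)) v) ∧
      (∀ v ∈ Icc ε (1 - ε),
        S.bar v ≤ q v ∧ q v ≤ S.mu * v ∧ q v ≤ S.gam * (1 - v)) ∧
      ContinuousOn q (Icc ε (1 - ε)) ∧ q (1 - ε) = S.bar (1 - ε) := by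
  have hε1 : ε < 1 := by linarith
  have hεhalf : ε ≤ 1 - ε := by linarith
  have hone : (1:ℝ) - ε < 1 := by linarith
  set m := ε * (1 - ε) with hmdef
  have hm : 0 < m := mul_pos hε0 (by linarith)
  set K : NNReal := Real.toNNReal (S.r / (S.D * S.lam ^ 2 * m)) with hK
  have hPL : IsPicardLindelof (S.trf m) (tmin := ε) (tmax := 1 - ε) ⟨1 - ε, hεhalf, le_rfl⟩
      (S.bar (1 - ε)) (Real.toNNReal S.C0) 0 (Real.toNNReal S.C0) K := by
    constructor
    · intro t _
      apply LipschitzWith.lipschitzOnWith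
      apply LipschitzWith.of_dist_le_mul
      intro p q
      rw [Real.dist_eq, Real.dist_eq, hK,
        Real.coe_toNNReal _ (div_nonneg S.hr.le (mul_pos (mul_pos S.hD (pow_pos S.hlam 2)) hm).le)]
      exact S.trf_lip hm t p q
    · intro x _
      exact (S.trf_contOn hm x).continuousOn
    · intro t _ x _
      rw [Real.norm_eq_abs, Real.coe_toNNReal _ S.hC0.le]
      exact S.trf_bound hm t x
    · simp only [Real.coe_toNNReal _ S.hC0.le, NNReal.coe_zero, sub_zero]
      have h1 : max ((1 - ε) - (1 - ε)) ((1 - ε) - ε) = 1 - 2 * ε := by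
        rw [sub_self, max_eq_right (by linarith)]
        ring
      rw [h1]
      nlinarith [S.hC0]
  obtain ⟨q, hq0, hq⟩ := hPL.exists_eq_forall_mem_Icc_hasDerivWithinAt₀
  replace hq0 : q (1 - ε) = S.bar (1 - ε) := hq0
  have hqc : ContinuousOn q (Icc ε (1 - ε)) := fun v hv => (hq v hv).continuousWithinAt
  have hmem0 : ∀ v ∈ Icc ε (1 - ε), 0 < v ∧ v < 1 := fun v hv =>
    ⟨lt_of_lt_of_le hε0 hv.1, lt_of_le_of_lt hv.2 hone⟩
  -- lower barrier
  have hlow : ∀ v ∈ Icc ε (1 - ε), S.bar v ≤ q v := by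
    have hb := barrier (G := fun v => q v - S.bar v) hεhalf
      (hqc.sub S.bar_cont.continuousOn)
      (by show 0 ≤ q (1 - ε) - S.bar (1 - ε); rw [hq0]; simp)
      (by
        intro v hv hGv
        obtain ⟨hv0, hv1⟩ := hmem0 v hv
        have hGv' : q v - S.bar v = 0 := hGv
        have hqv : q v = S.bar v := by linarith [hGv']
        refine ⟨-S.lam - S.lam * (1 - 2 * v), by nlinarith [S.hlam], ?_⟩
        have h1 := (hq v hv).sub ((S.bar_deriv v).hasDerivWithinAt)
        rw [hqv, S.trf_eq_fld hm (cc_eq hmdef hv)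
          (show S.lam * (v * (1 - v)) ≤ S.bar v from le_of_eq rfl),
          S.fld_bar hv0 hv1] at h1
        exact h1)
    intro v hv
    have h2 := hb v hv
    linarith
  -- upper barrier mu * v
  have hupmu : ∀ v ∈ Icc ε (1 - ε), q v ≤ S.mu * v := by
    have hb := barrier (G := fun v => S.mu * v - q v) hεhalf
      ((Continuous.continuousOn (by continuity)).sub hqc)
      (by
        show 0 ≤ S.mu * (1 - ε) - q (1 - ε)
        rw [hq0]
        simp only [bar]
        nlinarith [S.hlammu, S.hlam, mul_nonneg (show (0:ℝ) ≤ 1 - ε by linarith)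
          (show 0 ≤ S.mu - S.lam * ε by nlinarith [S.hlam, S.hlammu])])
      (by
        intro v hv hGv
        obtain ⟨hv0, hv1⟩ := hmem0 v hv
        have hGv' : S.mu * v - q v = 0 := hGv
        have hqv : q v = S.mu * v := by linarith [hGv']
        refine ⟨S.mu - S.fld v (S.mu * v), S.fld_mu_neg hv0, ?_⟩
        have h1 := (((hasDerivAt_id v).const_mul S.mu).hasDerivWithinAt).sub (hq v hv)
        rw [hqv, S.trf_eq_fld hm (cc_eq hmdef hv)
          (by nlinarith [mul_nonneg (mul_nonneg S.hlam.le hv0.le) hv0.le,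
            mul_pos (sub_pos.2 S.hlammu) hv0])] at h1
        exact h1.congr_deriv (by ring)
        )
    intro v hv
    have h2 := hb v hv
    linarith
  -- upper barrier gam * (1 - v)
  have hupgam : ∀ v ∈ Icc ε (1 - ε), q v ≤ S.gam * (1 - v) := by
    have hb := barrier (G := fun v => S.gam * (1 - v) - q v) hεhalf
      ((Continuous.continuousOn (by continuity)).sub hqc)
      (by
        show 0 ≤ S.gam * (1 - (1 - ε)) - q (1 - ε)
        rw [hq0]
        simp only [bar]
        nlinarith [S.hgam, S.hlam, mul_nonneg hε0.le
          (show 0 ≤ S.gam - S.lam * (1 - ε) by nlinarith [S.hlam, S.hgam])])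
      (by
        intro v hv hGv
        obtain ⟨hv0, hv1⟩ := hmem0 v hv
        have hGv' : S.gam * (1 - v) - q v = 0 := hGv
        have hqv : q v = S.gam * (1 - v) := by linarith [hGv']
        refine ⟨-S.gam - S.fld v (S.gam * (1 - v)), S.fld_gam hv0 hv1, ?_⟩
        have h1 := ((((hasDerivAt_const v (1:ℝ)).sub (hasDerivAt_id v)).const_mul
          S.gam).hasDerivWithinAt).sub (hq v hv)
        have h3 : S.lam * v ≤ S.gam := by nlinarith [S.hlam, S.hgam]
        rw [hqv, S.trf_eq_fld hm (cc_eq hmdef hv)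
          (by nlinarith [mul_nonneg (sub_nonneg.2 hv1.le) (sub_nonneg.2 h3)])] at h1
        exact h1.congr_deriv (by ring)
        )
    intro v hv
    have h2 := hb v hv
    linarith
  refine ⟨q, ?_, fun v hv => ⟨hlow v hv, hupmu v hv, hupgam v hv⟩, hqc, hq0⟩
  intro v hv
  have h1 := hq v hv
  rwa [S.trf_eq_fld hm (cc_eq hmdef hv) (hlow v hv)] at h1

/-- the sequence of shrinking left endpoints -/
noncomputable def ee (n : ℕ) : ℝ := 1 / (n + 4)

lemma ee_pos (n : ℕ) : 0 < ee n := by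
  have : (0:ℝ) < n + 4 := by positivity
  exact div_pos one_pos this

lemma ee_le (n : ℕ) : ee n ≤ 1 / 4 := by
  apply div_le_div_of_nonneg_left one_pos.le (by norm_num)
  · have : (0:ℝ) ≤ n := Nat.cast_nonneg n
    linarith

lemma ee_anti {k n : ℕ} (h : k < n) : ee n < ee k := by
  apply div_lt_div_of_pos_left one_pos
  · have : (0:ℝ) ≤ k := Nat.cast_nonneg k
    linarith
  · have : (k:ℝ) < n := by exact_mod_cast h
    linarith

lemma ee_mono {k n : ℕ} (h : k ≤ n) : ee n ≤ ee k := by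
  rcases lt_or_eq_of_le h with h | h
  · exact (ee_anti h).le
  · rw [h]

lemma Icc_ee_subset {k n : ℕ} (h : k ≤ n) :
    Icc (ee k) (1 - ee k) ⊆ Icc (ee n) (1 - ee n) :=
  Icc_subset_Icc (ee_mono h) (by linarith [ee_mono h])

lemma Icc_ee_subset_Ioo {k n : ℕ} (h : k < n) :
    Icc (ee k) (1 - ee k) ⊆ Ioo (ee n) (1 - ee n) :=
  fun x hx => ⟨lt_of_lt_of_le (ee_anti h) hx.1, lt_of_le_of_lt hx.2 (by linarith [ee_anti h])⟩

lemma Icc_ee_subset_Ioo01 (n : ℕ) : Icc (ee n) (1 - ee n) ⊆ Ioo (0:ℝ) 1 :=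
  fun x hx => ⟨lt_of_lt_of_le (ee_pos n) hx.1, lt_of_le_of_lt hx.2 (by linarith [ee_pos n])⟩

lemma Setup.fld_bound (S : Setup) {v x : ℝ} (hv0 : 0 < v) (hv1 : v < 1)
    (hx : S.bar v ≤ x) : |S.fld v x| ≤ S.C0 := by
  have hm : 0 < v * (1 - v) := mul_pos hv0 (by linarith)
  have h := S.trf_bound hm v x
  rwa [S.trf_eq_fld hm (max_self _) hx] at h

theorem exists_p (S : Setup) : ∃ p : ℝ → ℝ,
    (∀ v ∈ Ioo (0:ℝ) 1, HasDerivAt p (S.fld v (p v)) v) ∧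
    (∀ v ∈ Ioo (0:ℝ) 1, S.bar v ≤ p v ∧ p v ≤ S.mu * v ∧ p v ≤ S.gam * (1 - v)) := by
  classical
  choose Q hQd hQb hQc hQ0 using fun n : ℕ => exists_sol S (ee_pos n) (ee_le n)
  have half_mem : ∀ n, (1:ℝ)/2 ∈ Icc (ee n) (1 - ee n) := by
    intro n
    constructor
    · linarith [ee_le n]
    · linarith [ee_le n]
  -- step ordering via uniqueness
  have hmono1 : ∀ n, ∀ v ∈ Icc (ee n) (1 - ee n), Q n v ≤ Q (n + 1) v := by
    intro n
    by_contra hcon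
    push_neg at hcon
    obtain ⟨w, hw, hlt⟩ := hcon
    set a := ee n with hadef
    set b := 1 - ee n with hbdef
    have hab : a < b := by
      have := ee_le n; have := ee_pos n
      simp only [hadef, hbdef]; linarith
    have hsub1 : Icc a b ⊆ Icc (ee (n+1)) (1 - ee (n+1)) := Icc_ee_subset (Nat.le_succ n)
    have hnb : Q (n+1) b ≥ Q n b := by
      rw [hQ0 n]
      exact (hQb (n+1) b (hsub1 (right_mem_Icc.2 hab.le))).1
    have hwb : w < b := by
      rcases lt_or_eq_of_le hw.2 with h | h
      · exact h
      · exfalso; rw [h] at hlt; linarith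
    -- IVT to find a crossing point
    have hcont : ContinuousOn (fun v => Q (n+1) v - Q n v) (Icc w b) := by
      apply ContinuousOn.sub
      · exact ((hQc (n+1)).mono (fun x hx => hsub1 ⟨hw.1.trans hx.1, hx.2⟩))
      · exact ((hQc n).mono (Icc_subset_Icc hw.1 le_rfl))
    have hivt := intermediate_value_Icc hwb.le hcont
    have h0mem : (0:ℝ) ∈ Icc (Q (n+1) w - Q n w) (Q (n+1) b - Q n b) :=
      ⟨by linarith, by linarith⟩
    obtain ⟨v₀, hv₀mem, hv₀⟩ := hivt h0mem
    have hv₀w : w < v₀ := by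
      rcases lt_or_eq_of_le hv₀mem.1 with h | h
      · exact h
      · exfalso; rw [← h] at hv₀; simp only at hv₀; linarith
    -- uniqueness backwards from v₀
    set m := ee n * (1 - ee n) with hmdef
    have hm : 0 < m := mul_pos (ee_pos n) (by linarith [ee_le n, ee_pos n])
    set K : NNReal := Real.toNNReal (S.r / (S.D * S.lam ^ 2 * m)) with hK
    have hlips : ∀ t : ℝ, LipschitzOnWith K (fun x => S.trf m t x) (univ : Set ℝ) := by
      intro t
      apply LipschitzWith.lipschitzOnWith
      apply LipschitzWith.of_dist_le_mul
      intro p q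
      rw [Real.dist_eq, Real.dist_eq, hK,
        Real.coe_toNNReal _ (div_nonneg S.hr.le (mul_pos (mul_pos S.hD (pow_pos S.hlam 2)) hm).le)]
      exact S.trf_lip hm t p q
    have hIccsub : Icc w v₀ ⊆ Icc a b := Icc_subset_Icc hw.1 hv₀mem.2
    -- derivative facts in the trf field
    have hder1 : ∀ t ∈ Ioc w v₀, HasDerivWithinAt (Q n) (S.trf m t (Q n t)) (Iic t) t := by
      intro t ht
      have htab : t ∈ Icc a b := hIccsub ⟨ht.1.le, ht.2⟩
      have heq : S.trf m t (Q n t) = S.fld t (Q n t) :=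
        S.trf_eq_fld hm (cc_eq hmdef htab) (hQb n t htab).1
      rw [heq]
      rcases lt_or_eq_of_le htab.2 with h | h
      · exact ((hQd n t htab).hasDerivAt
          (Icc_mem_nhds (lt_of_le_of_lt hw.1 ht.1) h)).hasDerivWithinAt
      · subst h
        exact (hQd n b htab).mono_of_mem_nhdsWithin
          (Icc_mem_nhdsLE hab)
    have hIccsub' : Icc w v₀ ⊆ Icc (ee (n+1)) (1 - ee (n+1)) := hIccsub.trans hsub1
    have hder2 : ∀ t ∈ Ioc w v₀,
        HasDerivWithinAt (Q (n+1)) (S.trf m t (Q (n+1) t)) (Iic t) t := by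
      intro t ht
      have htab : t ∈ Icc a b := hIccsub ⟨ht.1.le, ht.2⟩
      have htn : t ∈ Icc (ee (n+1)) (1 - ee (n+1)) := hsub1 htab
      have heq : S.trf m t (Q (n+1) t) = S.fld t (Q (n+1) t) :=
        S.trf_eq_fld hm (cc_eq hmdef htab) (hQb (n+1) t htn).1
      rw [heq]
      have hIoo := Icc_ee_subset_Ioo (Nat.lt_succ_self n) htab
      exact ((hQd (n+1) t htn).hasDerivAt (Icc_mem_nhds hIoo.1 hIoo.2)).hasDerivWithinAt
    have hv₀eq : Q n v₀ = Q (n+1) v₀ := by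
      have h2 : Q (n+1) v₀ - Q n v₀ = 0 := hv₀
      linarith
    have huniq := ODE_solution_unique_of_mem_Icc_left (v := fun t x => S.trf m t x)
      (s := fun _ => (univ : Set ℝ)) (fun t _ => hlips t)
      ((hQc n).mono hIccsub) hder1 (fun t _ => mem_univ _)
      ((hQc (n+1)).mono hIccsub') hder2 (fun t _ => mem_univ _)
      hv₀eq.symm.symm
    have := huniq (left_mem_Icc.2 hv₀w.le)
    linarith
  -- ordering for arbitrary indices
  have hmono : ∀ k l : ℕ, k ≤ l → ∀ v ∈ Icc (ee k) (1 - ee k), Q k v ≤ Q l v := by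
    intro k l hkl
    induction l, hkl using Nat.le_induction with
    | base => intro v _; exact le_rfl
    | succ l hkl ih =>
      intro v hv
      exact (ih v hv).trans (hmono1 l v (Icc_ee_subset hkl hv))
  -- the monotone limit
  set g : ℕ → ℝ → ℝ := fun n v => if v ∈ Icc (ee n) (1 - ee n) then Q n v else S.bar v
    with hgdef
  have hbarle : ∀ (v : ℝ) (n : ℕ), S.bar v ≤ g n v := by
    intro v n
    by_cases hn : v ∈ Icc (ee n) (1 - ee n)
    · simp only [hgdef, if_pos hn]; exact (hQb n v hn).1
    · simp only [hgdef, if_neg hn]; exact le_rfl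
  have hgm : ∀ v : ℝ, Monotone (fun n => g n v) := by
    intro v
    apply monotone_nat_of_le_succ
    intro k
    by_cases hk : v ∈ Icc (ee k) (1 - ee k)
    · have hk1 : v ∈ Icc (ee (k+1)) (1 - ee (k+1)) := Icc_ee_subset (Nat.le_succ k) hk
      simp only [hgdef, if_pos hk, if_pos hk1]
      exact hmono1 k v hk
    · simp only [hgdef, if_neg hk]
      exact hbarle v (k+1)
  have hgmu : ∀ v ∈ Ioo (0:ℝ) 1, ∀ n, g n v ≤ S.mu * v := by
    intro v hv n
    by_cases hn : v ∈ Icc (ee n) (1 - ee n)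
    · simp only [hgdef, if_pos hn]; exact (hQb n v hn).2.1
    · simp only [hgdef, if_neg hn, bar]
      nlinarith [mul_nonneg (sub_nonneg.2 S.hlammu.le) hv.1.le,
        mul_nonneg (mul_nonneg S.hlam.le hv.1.le) hv.1.le]
  have hggam : ∀ v ∈ Ioo (0:ℝ) 1, ∀ n, g n v ≤ S.gam * (1 - v) := by
    intro v hv n
    by_cases hn : v ∈ Icc (ee n) (1 - ee n)
    · simp only [hgdef, if_pos hn]; exact (hQb n v hn).2.2
    · simp only [hgdef, if_neg hn, bar]
      have h3 : S.lam * v ≤ S.gam := by nlinarith [S.hlam, S.hgam, hv.2]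
      nlinarith [mul_nonneg (sub_nonneg.2 hv.2.le) (sub_nonneg.2 h3)]
  have hbdd : ∀ v ∈ Ioo (0:ℝ) 1, BddAbove (range fun n => g n v) := by
    intro v hv
    exact ⟨S.mu * v, forall_mem_range.2 fun n => hgmu v hv n⟩
  set p : ℝ → ℝ := fun v => ⨆ n, g n v with hpdef
  have htendsto : ∀ v ∈ Ioo (0:ℝ) 1, Tendsto (fun n => g n v) atTop (𝓝 (p v)) :=
    fun v hv => tendsto_atTop_ciSup (hgm v) (hbdd v hv)
  have hcov : ∀ v ∈ Ioo (0:ℝ) 1, ∃ N : ℕ, ∀ n, N ≤ n → v ∈ Icc (ee n) (1 - ee n) := by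
    intro v hv
    have hc : 0 < min v (1 - v) := lt_min hv.1 (by linarith [hv.2])
    obtain ⟨N, hN⟩ := exists_nat_gt (1 / min v (1 - v))
    refine ⟨N, fun n hn => ?_⟩
    have hNn : (N:ℝ) ≤ n := by exact_mod_cast hn
    have h4 : 1 / min v (1 - v) < (n:ℝ) + 4 := by linarith
    have h5 : ee n < min v (1 - v) := by
      rw [ee, div_lt_iff₀ (by positivity)]
      calc (1:ℝ) = (1 / min v (1 - v)) * min v (1 - v) := by field_simp
        _ < ((n:ℝ) + 4) * min v (1 - v) := by
            apply mul_lt_mul_of_pos_right h4 hc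
        _ = min v (1 - v) * ((n:ℝ) + 4) := by ring
    constructor
    · linarith [min_le_left v (1 - v)]
    · linarith [min_le_right v (1 - v)]
  have hQtend : ∀ v ∈ Ioo (0:ℝ) 1, Tendsto (fun n => Q n v) atTop (𝓝 (p v)) := by
    intro v hv
    obtain ⟨N, hN⟩ := hcov v hv
    apply (htendsto v hv).congr'
    filter_upwards [eventually_ge_atTop N] with n hn
    simp only [hgdef, if_pos (hN n hn)]
  have hpbar : ∀ v : ℝ, S.bar v ≤ p v ∨ ¬ BddAbove (range fun n => g n v) := by
    intro v
    by_cases hb : BddAbove (range fun n => g n v)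
    · exact Or.inl ((hbarle v 0).trans (le_ciSup hb 0))
    · exact Or.inr hb
  have hpbounds : ∀ v ∈ Ioo (0:ℝ) 1,
      S.bar v ≤ p v ∧ p v ≤ S.mu * v ∧ p v ≤ S.gam * (1 - v) := by
    intro v hv
    refine ⟨(hbarle v 0).trans (le_ciSup (hbdd v hv) 0),
      ciSup_le fun n => hgmu v hv n, ciSup_le fun n => hggam v hv n⟩
  -- Lipschitz bound for the limit on each interval
  have hQlip : ∀ N n : ℕ, N < n → ∀ x ∈ Icc (ee N) (1 - ee N), ∀ y ∈ Icc (ee N) (1 - ee N),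
      |Q n x - Q n y| ≤ S.C0 * |x - y| := by
    intro N n hNn x hx y hy
    have hf : ∀ t ∈ Icc (ee N) (1 - ee N),
        HasDerivWithinAt (Q n) (S.fld t (Q n t)) (Icc (ee N) (1 - ee N)) t := by
      intro t ht
      have hIoo := Icc_ee_subset_Ioo hNn ht
      exact ((hQd n t (Icc_ee_subset hNn.le ht)).hasDerivAt
        (Icc_mem_nhds hIoo.1 hIoo.2)).hasDerivWithinAt
    have hbound : ∀ t ∈ Icc (ee N) (1 - ee N), ‖S.fld t (Q n t)‖ ≤ S.C0 := by
      intro t ht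
      have ht01 := Icc_ee_subset_Ioo01 N ht
      rw [Real.norm_eq_abs]
      exact S.fld_bound ht01.1 ht01.2 (hQb n t (Icc_ee_subset hNn.le ht)).1
    have := (convex_Icc (ee N) (1 - ee N)).norm_image_sub_le_of_norm_hasDerivWithin_le
      hf hbound hy hx
    rwa [Real.norm_eq_abs, Real.norm_eq_abs] at this
  have hplip : ∀ N : ℕ, ∀ x ∈ Icc (ee N) (1 - ee N), ∀ y ∈ Icc (ee N) (1 - ee N),
      |p x - p y| ≤ S.C0 * |x - y| := by
    intro N x hx y hy
    have hx01 := Icc_ee_subset_Ioo01 N hx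
    have hy01 := Icc_ee_subset_Ioo01 N hy
    have htt : Tendsto (fun n => |Q n x - Q n y|) atTop (𝓝 (|p x - p y|)) :=
      ((hQtend x hx01).sub (hQtend y hy01)).abs
    apply le_of_tendsto htt
    filter_upwards [eventually_ge_atTop (N+1)] with n hn
    exact hQlip N n (Nat.lt_of_succ_le hn) x hx y hy
  have hpcont : ∀ N : ℕ, ContinuousOn p (Icc (ee N) (1 - ee N)) := by
    intro N
    have hlipon : LipschitzOnWith (Real.toNNReal S.C0) p (Icc (ee N) (1 - ee N)) := by
      rw [lipschitzOnWith_iff_dist_le_mul]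
      intro x hx y hy
      rw [Real.dist_eq, Real.dist_eq, Real.coe_toNNReal _ S.hC0.le]
      exact hplip N x hx y hy
    exact hlipon.continuousOn
  -- conclusion
  refine ⟨p, ?_, hpbounds⟩
  intro v₀ hv₀
  obtain ⟨N, hN⟩ := hcov v₀ hv₀
  set M := N + 1 with hMdef
  have hv₀J : v₀ ∈ Icc (ee M) (1 - ee M) := Icc_ee_subset (Nat.le_succ N) (hN N le_rfl)
  have hv₀Jo : v₀ ∈ Ioo (ee M) (1 - ee M) := Icc_ee_subset_Ioo (Nat.lt_succ_self N) (hN N le_rfl)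
  have hJ01 : Icc (ee M) (1 - ee M) ⊆ Ioo (0:ℝ) 1 := Icc_ee_subset_Ioo01 M
  set φ : ℝ → ℝ := fun t => S.fld t (p t) with hφdef
  have hppos : ∀ t ∈ Icc (ee M) (1 - ee M), 0 < p t := by
    intro t ht
    have ht01 := hJ01 ht
    have hbp : 0 < S.bar t := by
      simp only [bar]
      have h1 : 0 < t * (1 - t) := mul_pos ht01.1 (by linarith [ht01.2])
      exact mul_pos S.hlam h1
    linarith [(hpbounds t ht01).1]
  have hφcont : ContinuousOn φ (Icc (ee M) (1 - ee M)) := by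
    apply ContinuousOn.sub continuousOn_const
    apply ContinuousOn.div
    · exact ((continuous_const.mul continuous_id).mul
        (continuous_const.sub continuous_id)).continuousOn
    · exact continuousOn_const.mul (hpcont M)
    · intro t ht
      exact (mul_pos S.hD (hppos t ht)).ne'
  have hQφcont : ∀ n : ℕ, M < n → ContinuousOn (fun t => S.fld t (Q n t))
      (Icc (ee M) (1 - ee M)) := by
    intro n hn
    apply ContinuousOn.sub continuousOn_const
    apply ContinuousOn.div
    · exact ((continuous_const.mul continuous_id).mul
        (continuous_const.sub continuous_id)).continuousOn
    · exact continuousOn_const.mul ((hQc n).mono (Icc_ee_subset hn.le))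
    · intro t ht
      have ht01 := hJ01 ht
      have hbp : 0 < S.bar t := by
        simp only [bar]
        exact mul_pos S.hlam (mul_pos ht01.1 (by linarith [ht01.2]))
      have := (hQb n t (Icc_ee_subset hn.le ht)).1
      exact (mul_pos S.hD (by linarith)).ne'
  -- the integral equation for the limit
  have hinteq : ∀ x ∈ Icc (ee M) (1 - ee M),
      (∫ t in x..(1/2 : ℝ), φ t) = p (1/2) - p x := by
    intro x hx
    have hhalf : (1/2 : ℝ) ∈ Icc (ee M) (1 - ee M) := half_mem M
    have huIcc : uIcc x (1/2 : ℝ) ⊆ Icc (ee M) (1 - ee M) := uIcc_subset_Icc hx hhalf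
    -- exact equation for each n > M
    have heqn : ∀ n : ℕ, M < n →
        (∫ t in x..(1/2 : ℝ), S.fld t (Q n t)) = Q n (1/2) - Q n x := by
      intro n hn
      apply intervalIntegral.integral_eq_sub_of_hasDerivAt
      · intro t ht
        have htJ := huIcc ht
        have hIoo := Icc_ee_subset_Ioo hn htJ
        exact (hQd n t (Icc_ee_subset hn.le htJ)).hasDerivAt (Icc_mem_nhds hIoo.1 hIoo.2)
      · exact ((hQφcont n hn).mono huIcc).intervalIntegrable
    -- dominated convergence
    have hDCT : Tendsto (fun n => ∫ t in x..(1/2 : ℝ), S.fld t (Q n t)) atTop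
        (𝓝 (∫ t in x..(1/2 : ℝ), φ t)) := by
      apply intervalIntegral.tendsto_integral_filter_of_dominated_convergence
        (bound := fun _ => S.C0)
      · filter_upwards [eventually_ge_atTop (M+1)] with n hn
        exact ((hQφcont n (Nat.lt_of_succ_le hn)).mono
          (uIoc_subset_uIcc.trans huIcc)).aestronglyMeasurable measurableSet_uIoc
      · filter_upwards [eventually_ge_atTop (M+1)] with n hn
        apply MeasureTheory.ae_of_all
        intro t ht
        have htJ := huIcc (uIoc_subset_uIcc ht)
        have ht01 := hJ01 htJ
        rw [Real.norm_eq_abs]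
        exact S.fld_bound ht01.1 ht01.2
          (hQb n t (Icc_ee_subset (Nat.lt_of_succ_le hn).le htJ)).1
      · exact intervalIntegrable_const
      · apply MeasureTheory.ae_of_all
        intro t ht
        have htJ := huIcc (uIoc_subset_uIcc ht)
        have ht01 := hJ01 htJ
        apply Tendsto.sub tendsto_const_nhds
        apply Tendsto.div tendsto_const_nhds
        · exact tendsto_const_nhds.mul (hQtend t ht01)
        · exact (mul_pos S.hD (hppos t htJ)).ne'
    have hRHS : Tendsto (fun n => Q n (1/2 : ℝ) - Q n x) atTop (𝓝 (p (1/2) - p x)) :=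
      (hQtend _ (hJ01 hhalf)).sub (hQtend _ (hJ01 hx))
    have hDCT' : Tendsto (fun n => Q n (1/2 : ℝ) - Q n x) atTop
        (𝓝 (∫ t in x..(1/2 : ℝ), φ t)) := by
      apply hDCT.congr'
      filter_upwards [eventually_ge_atTop (M+1)] with n hn
      exact heqn n (Nat.lt_of_succ_le hn)
    exact tendsto_nhds_unique hDCT' hRHS
  -- FTC
  have hφmeas : StronglyMeasurableAtFilter φ (𝓝 v₀) :=
    (hφcont.mono Ioo_subset_Icc_self).stronglyMeasurableAtFilter isOpen_Ioo v₀ hv₀Jo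
  have hφint : IntervalIntegrable φ MeasureTheory.volume v₀ (1/2 : ℝ) :=
    (hφcont.mono (uIcc_subset_Icc hv₀J (half_mem M))).intervalIntegrable
  have hφca : ContinuousAt φ v₀ :=
    (hφcont.mono Ioo_subset_Icc_self).continuousAt (isOpen_Ioo.mem_nhds hv₀Jo)
  have hFTC := intervalIntegral.integral_hasDerivAt_left hφint hφmeas hφca
  have hee : p =ᶠ[𝓝 v₀] fun u => p (1/2 : ℝ) - ∫ t in u..(1/2 : ℝ), φ t := by
    apply Filter.eventuallyEq_of_mem (isOpen_Ioo.mem_nhds hv₀Jo)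
    intro u hu
    have := hinteq u (Ioo_subset_Icc_self hu)
    simp only
    linarith
  have h5 : HasDerivAt (fun u => p (1/2 : ℝ) - ∫ t in u..(1/2 : ℝ), φ t) (0 - (-φ v₀)) v₀ :=
    (hasDerivAt_const _ _).sub hFTC
  have h6 : HasDerivAt p (0 - (-φ v₀)) v₀ := h5.congr_of_eventuallyEq hee
  have h7 : 0 - (-φ v₀) = S.fld v₀ (p v₀) := by simp [hφdef]
  rwa [h7] at h6


theorem exists_V (S : Setup) :
    ∃ V : ℝ → ℝ, ContDiff ℝ 2 V ∧ Antitone V ∧ (∀ z, V z ∈ Ioo (0:ℝ) 1) ∧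
      (∀ z, S.D * deriv (deriv V) z + S.θ * deriv V z + S.r * V z * (1 - V z) = 0) ∧
      Tendsto V atBot (𝓝 1) ∧ Tendsto V atTop (𝓝 0) := by
  classical
  obtain ⟨p, hpd, hpb⟩ := exists_p S
  have hhalf : (1/2 : ℝ) ∈ Ioo (0:ℝ) 1 := by norm_num
  have hppos : ∀ v ∈ Ioo (0:ℝ) 1, 0 < p v := by
    intro v hv
    have hbp : 0 < S.bar v := by
      simp only [Setup.bar]
      exact mul_pos S.hlam (mul_pos hv.1 (by linarith [hv.2]))
    linarith [(hpb v hv).1]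
  have hpcont : ContinuousOn p (Ioo (0:ℝ) 1) :=
    fun v hv => ((hpd v hv).differentiableAt.continuousAt).continuousWithinAt
  set φ : ℝ → ℝ := fun t => (p t)⁻¹ with hφdef
  have hφcont : ContinuousOn φ (Ioo (0:ℝ) 1) :=
    ContinuousOn.inv₀ hpcont fun t ht => (hppos t ht).ne'
  have hφpos : ∀ t ∈ Ioo (0:ℝ) 1, 0 < φ t := fun t ht => inv_pos.2 (hppos t ht)
  have hint : ∀ x ∈ Ioo (0:ℝ) 1, ∀ y ∈ Ioo (0:ℝ) 1,
      IntervalIntegrable φ MeasureTheory.volume x y := by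
    intro x hx y hy
    exact (hφcont.mono ((ordConnected_Ioo).uIcc_subset hx hy)).intervalIntegrable
  set ζ : ℝ → ℝ := fun v => ∫ t in v..(1/2 : ℝ), φ t with hζdef
  have hζd : ∀ v ∈ Ioo (0:ℝ) 1, HasDerivAt ζ (-φ v) v := by
    intro v hv
    exact intervalIntegral.integral_hasDerivAt_left (hint v hv _ hhalf)
      ((hφcont.stronglyMeasurableAtFilter isOpen_Ioo) v hv)
      (hφcont.continuousAt (isOpen_Ioo.mem_nhds hv))
  have hζcont : ContinuousOn ζ (Ioo (0:ℝ) 1) :=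
    fun v hv => ((hζd v hv).differentiableAt.continuousAt).continuousWithinAt
  have hζsub : ∀ x ∈ Ioo (0:ℝ) 1, ∀ y ∈ Ioo (0:ℝ) 1,
      ζ x - ζ y = ∫ t in x..y, φ t := by
    intro x hx y hy
    have hadd := intervalIntegral.integral_add_adjacent_intervals
      (hint x hx y hy) (hint y hy _ hhalf)
    simp only [hζdef]
    linarith [hadd]
  have hζanti : StrictAntiOn ζ (Ioo (0:ℝ) 1) := by
    intro x hx y hy hxy
    have hpos : 0 < ∫ t in x..y, φ t := by
      apply intervalIntegral.intervalIntegral_pos_of_pos_on (hint x hx y hy)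
      · intro t ht
        exact hφpos t ⟨hx.1.trans ht.1, ht.2.trans hy.2⟩
      · exact hxy
    have := hζsub x hx y hy
    linarith
  -- lower bound of ζ near 0: ζ v ≥ mu⁻¹ * (log (1/2) - log v)
  have hlow : ∀ v ∈ Ioo (0:ℝ) (1/2:ℝ),
      S.mu⁻¹ * (Real.log (1/2) - Real.log v) ≤ ζ v := by
    intro v hv
    have hv01 : v ∈ Ioo (0:ℝ) 1 := ⟨hv.1, by linarith [hv.2]⟩
    have hcmp : ∀ t ∈ Icc v (1/2 : ℝ), (S.mu * t)⁻¹ ≤ φ t := by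
      intro t ht
      have ht01 : t ∈ Ioo (0:ℝ) 1 := ⟨lt_of_lt_of_le hv.1 ht.1, by linarith [ht.2]⟩
      have h1 : p t ≤ S.mu * t := (hpb t ht01).2.1
      have h2 : 0 < p t := hppos t ht01
      exact inv_anti₀ h2 h1
    have hmuint : IntervalIntegrable (fun t => (S.mu * t)⁻¹) MeasureTheory.volume v (1/2 : ℝ) := by
      apply ContinuousOn.intervalIntegrable
      apply ContinuousOn.inv₀
      · exact (continuous_const.mul continuous_id).continuousOn
      · intro t ht
        rw [uIcc_of_le hv.2.le] at ht
        exact (mul_pos S.hmu (lt_of_lt_of_le hv.1 ht.1)).ne'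
    have hmono := intervalIntegral.integral_mono_on hv.2.le hmuint
      (hint v hv01 _ hhalf) hcmp
    have hcalc : (∫ t in v..(1/2 : ℝ), (S.mu * t)⁻¹)
        = S.mu⁻¹ * Real.log (1/2) - S.mu⁻¹ * Real.log v := by
      have := intervalIntegral.integral_eq_sub_of_hasDerivAt
        (f := fun t => S.mu⁻¹ * Real.log t) (f' := fun t => (S.mu * t)⁻¹)
        (a := v) (b := (1/2 : ℝ)) ?_ hmuint
      · rw [this]
      · intro t ht
        rw [uIcc_of_le hv.2.le] at ht
        have ht0 : t ≠ 0 := (lt_of_lt_of_le hv.1 ht.1).ne'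
        have h3 := (Real.hasDerivAt_log ht0).const_mul (S.mu⁻¹)
        exact h3.congr_deriv (by rw [mul_inv])
    calc S.mu⁻¹ * (Real.log (1/2) - Real.log v)
        = S.mu⁻¹ * Real.log (1/2) - S.mu⁻¹ * Real.log v := by ring
      _ = ∫ t in v..(1/2 : ℝ), (S.mu * t)⁻¹ := hcalc.symm
      _ ≤ ζ v := hmono
  -- upper bound of ζ near 1: ζ v ≤ gam⁻¹ * (log (1-v) - log (1/2))
  have hup : ∀ v ∈ Ioo (1/2 : ℝ) 1,
      ζ v ≤ S.gam⁻¹ * (Real.log (1 - v) - Real.log (1/2)) := by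
    intro v hv
    have hv01 : v ∈ Ioo (0:ℝ) 1 := ⟨by linarith [hv.1], hv.2⟩
    have hcmp : ∀ t ∈ Icc (1/2 : ℝ) v, (S.gam * (1 - t))⁻¹ ≤ φ t := by
      intro t ht
      have ht01 : t ∈ Ioo (0:ℝ) 1 := ⟨by linarith [ht.1], lt_of_le_of_lt ht.2 hv.2⟩
      have h1 : p t ≤ S.gam * (1 - t) := (hpb t ht01).2.2
      exact inv_anti₀ (hppos t ht01) h1
    have hgint : IntervalIntegrable (fun t => (S.gam * (1 - t))⁻¹)
        MeasureTheory.volume (1/2 : ℝ) v := by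
      apply ContinuousOn.intervalIntegrable
      apply ContinuousOn.inv₀
      · exact (continuous_const.mul (continuous_const.sub continuous_id)).continuousOn
      · intro t ht
        rw [uIcc_of_le hv.1.le] at ht
        exact (mul_pos S.hgam0 (by linarith [ht.2, hv.2] : (0:ℝ) < 1 - t)).ne'
    have hmono := intervalIntegral.integral_mono_on hv.1.le hgint
      (hint _ hhalf v hv01) hcmp
    have hcalc : (∫ t in (1/2 : ℝ)..v, (S.gam * (1 - t))⁻¹)
        = (-(S.gam⁻¹ * Real.log (1 - v))) - (-(S.gam⁻¹ * Real.log (1 - 1/2))) := by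
      have := intervalIntegral.integral_eq_sub_of_hasDerivAt
        (f := fun t => -(S.gam⁻¹ * Real.log (1 - t))) (f' := fun t => (S.gam * (1 - t))⁻¹)
        (a := (1/2:ℝ)) (b := v) ?_ hgint
      · rw [this]
      · intro t ht
        rw [uIcc_of_le hv.1.le] at ht
        have ht1 : (1:ℝ) - t ≠ 0 := by
          have : t < 1 := lt_of_le_of_lt ht.2 hv.2
          intro h; rw [sub_eq_zero] at h; linarith [h.symm]
        have h4 : HasDerivAt (fun t : ℝ => (1:ℝ) - t) (-1) t := by
          exact ((hasDerivAt_const t (1:ℝ)).sub (hasDerivAt_id t)).congr_deriv (by ring)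
        have h3 := ((Real.hasDerivAt_log ht1).comp t h4).const_mul S.gam⁻¹
        have h5 := h3.neg
        exact h5.congr_deriv (by rw [mul_inv]; ring)
    have hζv : ζ v = ζ v - ζ (1/2 : ℝ) := by
      have : ζ (1/2 : ℝ) = 0 := by simp [hζdef]
      linarith
    rw [hζv]
    have h6 : ζ v - ζ (1/2:ℝ) = -(∫ t in (1/2:ℝ)..v, φ t) := by
      have := hζsub _ hhalf v hv01
      linarith
    rw [h6]
    have h7 : (∫ t in (1/2:ℝ)..v, (S.gam * (1-t))⁻¹) ≤ ∫ t in (1/2:ℝ)..v, φ t := hmono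
    rw [hcalc] at h7
    have : Real.log (1 - 1/2 : ℝ) = Real.log (1/2 : ℝ) := by norm_num
    rw [this] at h7
    linarith
  -- surjectivity of ζ
  have hsurj : ∀ z : ℝ, ∃ v ∈ Ioo (0:ℝ) 1, ζ v = z := by
    intro z
    -- a point with large ζ
    obtain ⟨a, ha, hζa⟩ : ∃ a, a ∈ Ioo (0:ℝ) (1/2 : ℝ) ∧ z < ζ a := by
      have h1 : Tendsto (fun v => S.mu⁻¹ * (Real.log (1/2) - Real.log v)) (𝓝[>] (0:ℝ)) atTop := by
        apply Tendsto.const_mul_atTop (inv_pos.2 S.hmu)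
        apply tendsto_atTop_add_const_left
        exact tendsto_neg_atBot_atTop.comp Real.tendsto_log_nhdsGT_zero
      have h2 : ∀ᶠ v in 𝓝[>] (0:ℝ), z < S.mu⁻¹ * (Real.log (1/2) - Real.log v) :=
        h1.eventually_gt_atTop z
      have h3 : Ioo (0:ℝ) (1/2:ℝ) ∈ 𝓝[>] (0:ℝ) :=
        Ioo_mem_nhdsGT_of_mem ⟨le_rfl, one_half_pos⟩
      obtain ⟨a, ha2, ha1⟩ := (h2.and (eventually_of_mem h3 fun x hx => hx)).exists
      exact ⟨a, ha1, lt_of_lt_of_le ha2 (hlow a ha1)⟩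
    obtain ⟨b, hb, hζb⟩ : ∃ b, b ∈ Ioo (1/2 : ℝ) 1 ∧ ζ b < z := by
      have h0 : Tendsto (fun v : ℝ => 1 - v) (𝓝[<] (1:ℝ)) (𝓝[>] (0:ℝ)) := by
        apply tendsto_nhdsWithin_of_tendsto_nhds_of_eventually_within
        · have hcont : Continuous (fun v : ℝ => 1 - v) := by continuity
          have h9 := hcont.tendsto (1:ℝ)
          norm_num at h9
          exact h9.mono_left nhdsWithin_le_nhds
        · filter_upwards [self_mem_nhdsWithin] with v hv
          simp only [mem_Iio] at hv
          simpa using hv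
      have h1 : Tendsto (fun v => S.gam⁻¹ * (Real.log (1 - v) - Real.log (1/2)))
          (𝓝[<] (1:ℝ)) atBot := by
        have h4 : Tendsto (fun v : ℝ => Real.log (1 - v)) (𝓝[<] (1:ℝ)) atBot :=
          Real.tendsto_log_nhdsGT_zero.comp h0
        have h5 : Tendsto (fun v : ℝ => Real.log (1 - v) - Real.log (1/2)) (𝓝[<] (1:ℝ)) atBot :=
          tendsto_atBot_add_const_right _ _ h4
        have h6 := h5.const_mul_atBot (inv_pos.2 S.hgam0)
        exact h6
      have h2 : ∀ᶠ v in 𝓝[<] (1:ℝ), S.gam⁻¹ * (Real.log (1 - v) - Real.log (1/2)) < z :=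
        h1.eventually_lt_atBot z
      have h3 : Ioo (1/2:ℝ) 1 ∈ 𝓝[<] (1:ℝ) :=
        Ioo_mem_nhdsLT_of_mem ⟨one_half_lt_one, le_rfl⟩
      obtain ⟨b, hb2, hb1⟩ := (h2.and (eventually_of_mem h3 fun x hx => hx)).exists
      exact ⟨b, hb1, lt_of_le_of_lt (hup b hb1) hb2⟩
    have hab : a < b := ha.2.trans hb.1
    have hsubIcc : Icc a b ⊆ Ioo (0:ℝ) 1 :=
      fun x hx => ⟨lt_of_lt_of_le ha.1 hx.1, lt_of_le_of_lt hx.2 hb.2⟩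
    have hzmem : z ∈ Icc (ζ b) (ζ a) := ⟨hζb.le, hζa.le⟩
    obtain ⟨v, hvmem, hζv⟩ := intermediate_value_Icc' hab.le (hζcont.mono hsubIcc) hzmem
    exact ⟨v, hsubIcc hvmem, hζv⟩
  choose V hV using hsurj
  have hVmem : ∀ z, V z ∈ Ioo (0:ℝ) 1 := fun z => (hV z).1
  have hVζ : ∀ z, ζ (V z) = z := fun z => (hV z).2
  -- V inverts ζ
  have hlt : ∀ x ∈ Ioo (0:ℝ) 1, ∀ y ∈ Ioo (0:ℝ) 1, ζ y < ζ x → x < y := by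
    intro x hx y hy h
    rcases lt_trichotomy x y with h1 | h1 | h1
    · exact h1
    · exfalso; rw [h1] at h; exact lt_irrefl _ h
    · exfalso; exact absurd (hζanti hy hx h1) (not_lt.2 h.le)
  have hVanti : StrictAnti V := by
    intro z z' hzz
    have hx := hVmem z
    have hy := hVmem z'
    apply hlt _ hy _ hx
    rw [hVζ, hVζ]
    exact hzz
  -- continuity of V
  have hVcont : Continuous V := by
    rw [continuous_iff_continuousAt]
    intro z
    rw [Metric.continuousAt_iff]
    intro εp hεp
    have hv0 := hVmem z
    set v0 := V z with hv0def
    set ε' : ℝ := min εp (min (v0/2) ((1 - v0)/2)) with hε'def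
    have hε'pos : 0 < ε' := by
      apply lt_min hεp
      apply lt_min
      · linarith [hv0.1]
      · linarith [hv0.2]
    have hε'1 : ε' ≤ v0/2 := le_trans (min_le_right _ _) (min_le_left _ _)
    have hε'2 : ε' ≤ (1 - v0)/2 := le_trans (min_le_right _ _) (min_le_right _ _)
    have hmem1 : v0 - ε' ∈ Ioo (0:ℝ) 1 := ⟨by linarith [hv0.1], by linarith [hv0.2]⟩
    have hmem2 : v0 + ε' ∈ Ioo (0:ℝ) 1 := ⟨by linarith [hv0.1], by linarith [hv0.2]⟩
    have hζz : ζ v0 = z := hVζ z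
    have hd1 : ζ (v0 + ε') < z := by
      rw [← hζz]
      exact hζanti hv0 hmem2 (by linarith)
    have hd2 : z < ζ (v0 - ε') := by
      rw [← hζz]
      exact hζanti hmem1 hv0 (by linarith)
    refine ⟨min (z - ζ (v0 + ε')) (ζ (v0 - ε') - z), by
      apply lt_min <;> linarith, ?_⟩
    intro y hy
    rw [Real.dist_eq] at hy
    have hy1 : ζ (v0 + ε') < y := by
      have := abs_lt.1 hy
      have h2 := min_le_left (z - ζ (v0 + ε')) (ζ (v0 - ε') - z)
      linarith [this.1]
    have hy2 : y < ζ (v0 - ε') := by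
      have := abs_lt.1 hy
      have h2 := min_le_right (z - ζ (v0 + ε')) (ζ (v0 - ε') - z)
      linarith [this.2]
    have hVy := hVmem y
    have hVyζ := hVζ y
    have hup' : V y < v0 + ε' := by
      apply hlt _ hVy _ hmem2
      rw [hVyζ]
      exact hy1
    have hlo' : v0 - ε' < V y := by
      apply hlt _ hmem1 _ hVy
      rw [hVyζ]
      exact hy2
    rw [Real.dist_eq, abs_lt]
    have h3 : ε' ≤ εp := min_le_left _ _
    constructor
    · linarith
    · linarith
  -- derivative of V
  have hVd : ∀ z, HasDerivAt V (-(p (V z))) z := by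
    intro z
    have h1 : HasDerivAt ζ (-φ (V z)) (V z) := hζd _ (hVmem z)
    have h2 : -φ (V z) ≠ 0 := by
      simp only [hφdef, ne_eq, neg_eq_zero, inv_eq_zero]
      exact (hppos _ (hVmem z)).ne'
    have h3 := HasDerivAt.of_local_left_inverse (hVcont.continuousAt) h1 h2
      (Filter.Eventually.of_forall fun y => hVζ y)
    have h4 : (-φ (V z))⁻¹ = -(p (V z)) := by
      simp only [hφdef]
      rw [inv_neg, inv_inv]
    rwa [h4] at h3
  have hVdiff : Differentiable ℝ V := fun z => (hVd z).differentiableAt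
  have hderivV : deriv V = fun z => -(p (V z)) := funext fun z => (hVd z).deriv
  have hppV : ∀ z, 0 < p (V z) := fun z => hppos _ (hVmem z)
  -- second derivative
  have hVd2 : ∀ z, HasDerivAt (deriv V) (S.fld (V z) (p (V z)) * p (V z)) z := by
    intro z
    have h1 : HasDerivAt (fun y => p (V y)) (S.fld (V z) (p (V z)) * (-(p (V z)))) z :=
      (hpd _ (hVmem z)).comp z (hVd z)
    have h2 := h1.neg
    rw [hderivV]
    exact h2.congr_deriv (by ring)
  -- p ∘ V continuous, fld ∘ (V, p∘V) continuous
  have hpVcont : Continuous (fun z => p (V z)) :=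
    hpcont.comp_continuous hVcont hVmem
  have hfldVcont : Continuous (fun z => S.fld (V z) (p (V z))) := by
    simp only [Setup.fld]
    apply Continuous.sub continuous_const
    apply Continuous.div
    · exact (continuous_const.mul hVcont).mul (continuous_const.sub hVcont)
    · exact continuous_const.mul hpVcont
    · intro z
      exact (mul_pos S.hD (hppV z)).ne'
  have hderivV2 : deriv (deriv V) = fun z => S.fld (V z) (p (V z)) * p (V z) :=
    funext fun z => (hVd2 z).deriv
  refine ⟨V, ?_, hVanti.antitone, hVmem, ?_, ?_, ?_⟩
  · -- ContDiff ℝ 2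
    rw [show (2 : WithTop ℕ∞) = 1 + 1 from by norm_num, contDiff_succ_iff_deriv]
    refine ⟨hVdiff, by simp, ?_⟩
    rw [contDiff_one_iff_deriv]
    constructor
    · intro z
      exact (hVd2 z).differentiableAt
    · rw [hderivV2]
      exact hfldVcont.mul hpVcont
  · -- the ODE
    intro z
    rw [hderivV2, hderivV]
    simp only [Setup.fld]
    have hD := S.hD.ne'
    have hp := (hppV z).ne'
    field_simp
    ring
  · -- limit at -∞ is 1
    rw [tendsto_order]
    constructor
    · intro c hc
      rcases lt_or_ge c 0 with h | h
      · exact Filter.Eventually.of_forall fun z => lt_of_lt_of_le h (hVmem z).1.le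
      · set v'' : ℝ := (max c 0 + 1)/2 with hv''def
        have hc1 : c < 1 := hc
        have hmaxlt : max c 0 < 1 := max_lt hc1 one_pos
        have hv''mem : v'' ∈ Ioo (0:ℝ) 1 := by
          constructor
          · have := le_max_right c 0
            simp only [hv''def]
            linarith
          · simp only [hv''def]
            linarith
        have hcv'' : c < v'' := by
          have := le_max_left c 0
          simp only [hv''def]
          linarith
        filter_upwards [eventually_lt_atBot (ζ v'')] with z hz
        have h2 : v'' < V z := by
          apply hlt _ hv''mem _ (hVmem z)
          rw [hVζ]
          exact hz
        linarith
    · intro c hc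
      exact Filter.Eventually.of_forall fun z => lt_of_le_of_lt (hVmem z).2.le hc
  · -- limit at +∞ is 0
    rw [tendsto_order]
    constructor
    · intro c hc
      exact Filter.Eventually.of_forall fun z => lt_of_lt_of_le hc (hVmem z).1.le
    · intro c hc
      rcases le_or_gt 1 c with h | h
      · exact Filter.Eventually.of_forall fun z => lt_of_lt_of_le (hVmem z).2 h
      · set v' : ℝ := c/2 with hv'def
        have hv'mem : v' ∈ Ioo (0:ℝ) 1 := ⟨by simp only [hv'def]; linarith,
          by simp only [hv'def]; linarith⟩
        filter_upwards [eventually_gt_atTop (ζ v')] with z hz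
        have h2 : V z < v' := by
          apply hlt _ (hVmem z) _ hv'mem
          rw [hVζ]
          exact hz
        have : v' < c := by simp only [hv'def]; linarith
        linarith

end FKPP

open Filter

theorem fisher_kpp_front_existence (r D θ : ℝ) (hr : 0 < r) (hD : 0 < D)
    (hθ : 2 * Real.sqrt (r * D) ≤ θ) :
    ∃ V : ℝ → ℝ, ContDiff ℝ 2 V ∧ Antitone V ∧
      (∀ z, V z ∈ Set.Ioo (0 : ℝ) 1) ∧
      (∀ z, D * deriv (deriv V) z + θ * deriv V z + r * V z * (1 - V z) = 0) ∧
      Tendsto V atBot (nhds 1) ∧ Tendsto V atTop (nhds 0) := by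
  have hrD : 0 < r * D := mul_pos hr hD
  have hsqpos : 0 < Real.sqrt (r * D) := Real.sqrt_pos.2 hrD
  have hθ0 : 0 < θ := lt_of_lt_of_le (by linarith) hθ
  have hdisc : 4 * (r * D) ≤ θ ^ 2 := by
    nlinarith [Real.sq_sqrt hrD.le, Real.sqrt_nonneg (r * D)]
  set s : ℝ := Real.sqrt (θ ^ 2 - 4 * (r * D)) with hsdef
  have hs2 : s ^ 2 = θ ^ 2 - 4 * (r * D) := Real.sq_sqrt (by linarith)
  have hs0 : 0 ≤ s := Real.sqrt_nonneg _
  have hsθ : s < θ := by nlinarith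
  set t : ℝ := Real.sqrt (θ ^ 2 + 4 * (r * D)) with htdef
  have ht2 : t ^ 2 = θ ^ 2 + 4 * (r * D) := Real.sq_sqrt (by positivity)
  have ht0 : 0 ≤ t := Real.sqrt_nonneg _
  have htθ : θ < t := by nlinarith
  set mu : ℝ := (θ - s) / (2 * D) with hmudef
  set lam : ℝ := (t - θ) / (2 * D) with hlamdef
  have hmu0 : 0 < mu := div_pos (by linarith) (by linarith)
  have hlam0 : 0 < lam := div_pos (by linarith) (by linarith)
  have hD' : (2 : ℝ) * D ≠ 0 := by positivity
  have hmueq : D * mu ^ 2 - θ * mu + r = 0 := by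
    rw [hmudef]
    field_simp
    nlinarith [hs2]
  have hlameq : D * lam ^ 2 + θ * lam - r = 0 := by
    rw [hlamdef]
    field_simp
    nlinarith [ht2]
  have hlammu : lam < mu := by
    nlinarith [hmueq, hlameq, mul_pos hlam0 hlam0, sq_nonneg mu, mul_pos hθ0 hlam0]
  obtain ⟨V, h1, h2, h3, h4, h5, h6⟩ :=
    FKPP.exists_V ⟨r, D, θ, lam, mu, hr, hD, hθ0, hlam0, hlammu, hlameq, hmueq⟩
  exact ⟨V, h1, h2, h3, h4, h5, h6⟩
end
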